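/- arXiv:1602.01896 — 4 statements merged into one kernel-verified Lean document; each statement's English description precedes it below -/
import Mathlib

section
/- Under the hypotheses of the cycle inequality (x(v_k)·|d(u_{k+1},v_k)| ≤ |θ(u_{k+1})| and |θ(u_k)| ≤ x(v_k)·|d(u_k,v_k)| for all k, all quantities positive, indices cyclic), taking logarithms yields ∑_{k=1}^m (w(u_k, v_k) − w(u_{k+1}, v_k)) ≥ 0 where w(u,v) = log|d(u,v)|; hence the residual graph of an equilibrium flow contains no negative-cost cycle with costs w on forward edges and −w on backward edges. -/
/-- Taking logarithms in the cycle inequality: the residual cycle has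
nonnegative cost with costs `w(u,v) = log |d(u,v)|`. -/
theorem stmt_5 (m : ℕ) [NeZero m] (xv θ dk dk1 : Fin m → ℝ)
    (hx : ∀ k, 0 < xv k) (hθ : ∀ k, 0 < θ k)
    (hdk : ∀ k, 0 < dk k) (hdk1 : ∀ k, 0 < dk1 k)
    (h1 : ∀ k, xv k * dk1 k ≤ θ (k + 1))
    (h2 : ∀ k, θ k ≤ xv k * dk k) :
    0 ≤ ∑ k, (Real.log (dk k) - Real.log (dk1 k)) := by
  have key : ∀ k, Real.log (θ k) - Real.log (θ (k+1)) ≤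
      Real.log (dk k) - Real.log (dk1 k) := by
    intro k
    have ha : Real.log (θ k) ≤ Real.log (xv k) + Real.log (dk k) := by
      rw [← Real.log_mul (hx k).ne' (hdk k).ne']
      exact Real.log_le_log (hθ k) (h2 k)
    have hb : Real.log (xv k) + Real.log (dk1 k) ≤ Real.log (θ (k+1)) := by
      rw [← Real.log_mul (hx k).ne' (hdk1 k).ne']
      exact Real.log_le_log (mul_pos (hx k) (hdk1 k)) (h1 k)
    linarith
  have tele : ∑ k, (Real.log (θ k) - Real.log (θ (k+1))) = 0 := by
    rw [Finset.sum_sub_distrib]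
    have : ∑ k, Real.log (θ (k+1)) = ∑ k, Real.log (θ k) :=
      Fintype.sum_equiv (Equiv.addRight (1 : Fin m)) _ _ (fun k => rfl)
    rw [this, sub_self]
  calc (0:ℝ) = ∑ k, (Real.log (θ k) - Real.log (θ (k+1))) := tele.symm
    _ ≤ _ := Finset.sum_le_sum fun k _ => key k
end

section
/- Let x and x' be two Nash equilibria of a CE game. For every site ψ, either x_{0,ψ} = x'_{0,ψ} (the catcher's coverage agrees) or x_{Σ,ψ} = x'_{Σ,ψ} (the total evader resource agrees). Equivalently, there do not exist two Nash equilibria x, x' and a site ψ with x_{0,ψ} ≠ x'_{0,ψ} and x_{Σ,ψ} ≠ x'_{Σ,ψ}. -/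
open Finset in
/-- Feasibility of an allocation: nonnegative, within per-site caps, exhausting
the budget `r`. -/
def CEFeasible {Ψ : Type*} [Fintype Ψ] (r : ℝ) (ℓ y : Ψ → ℝ) : Prop :=
  (∀ ψ, 0 ≤ y ψ) ∧ (∀ ψ, y ψ ≤ ℓ ψ) ∧ ∑ ψ, y ψ = r

open Finset in
/-- Nash equilibrium of a CE game with catcher data `(r0, ℓ0, b0, d0)` and
evader data `(re, ℓe, be, de)`. -/
def CENash {n : ℕ} {Ψ : Type*} [Fintype Ψ]
    (r0 : ℝ) (ℓ0 b0 d0 : Ψ → ℝ)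
    (re : Fin n → ℝ) (ℓe be de : Fin n → Ψ → ℝ)
    (x0 : Ψ → ℝ) (xe : Fin n → Ψ → ℝ) : Prop :=
  CEFeasible r0 ℓ0 x0 ∧ (∀ i, CEFeasible (re i) (ℓe i) (xe i)) ∧
  (∀ y : Ψ → ℝ, CEFeasible r0 ℓ0 y →
    ∑ ψ, (b0 ψ + d0 ψ * ∑ i, xe i ψ) * y ψ ≤
      ∑ ψ, (b0 ψ + d0 ψ * ∑ i, xe i ψ) * x0 ψ) ∧
  (∀ i, ∀ y : Ψ → ℝ, CEFeasible (re i) (ℓe i) y →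
    ∑ ψ, (be i ψ + de i ψ * x0 ψ) * y ψ ≤
      ∑ ψ, (be i ψ + de i ψ * x0 ψ) * xe i ψ)

open Finset in
lemma CE_exchange {Ψ : Type*} [Fintype Ψ] {r : ℝ} {ℓ c y : Ψ → ℝ}
    (hf : CEFeasible r ℓ y)
    (hopt : ∀ z, CEFeasible r ℓ z → ∑ χ, c χ * z χ ≤ ∑ χ, c χ * y χ)
    {ψ φ : Ψ} (hψ : 0 < y ψ) (hφ : y φ < ℓ φ) : c φ ≤ c ψ := by
  classical
  obtain ⟨h0, hcap, hsum⟩ := hf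
  by_cases hpf : ψ = φ
  · exact hpf ▸ le_refl _
  · have hfp : ¬ φ = ψ := fun h => hpf h.symm
    set ε : ℝ := min (y ψ) (ℓ φ - y φ) with hε
    have hεpos : 0 < ε := lt_min hψ (by linarith)
    have hεy : ε ≤ y ψ := min_le_left _ _
    have hεℓ : ε ≤ ℓ φ - y φ := min_le_right _ _
    set z : Ψ → ℝ := fun χ => y χ +
      ((if χ = ψ then -ε else 0) + (if χ = φ then ε else 0)) with hz
    have hzsum : ∀ (g : Ψ → ℝ), ∑ χ, g χ * z χ
        = ∑ χ, g χ * y χ + (g ψ * (-ε) + g φ * ε) := by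
      intro g
      have key : ∀ χ, g χ * z χ = g χ * y χ +
          ((if χ = ψ then g ψ * (-ε) else 0) + (if χ = φ then g φ * ε else 0)) := by
        intro χ
        by_cases h1 : χ = ψ
        · subst h1; simp [hz, hpf]; ring
        · by_cases h2 : χ = φ
          · subst h2; simp [hz, hfp]; ring
          · simp [hz, h1, h2]
      rw [Finset.sum_congr rfl (fun χ _ => key χ)]
      rw [Finset.sum_add_distrib, Finset.sum_add_distrib]
      simp [Finset.sum_ite_eq']
    have hzval : ∀ χ, z χ = y χ +
        ((if χ = ψ then -ε else 0) + (if χ = φ then ε else 0)) := fun χ => rfl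
    have hzfeas : CEFeasible r ℓ z := by
      refine ⟨?_, ?_, ?_⟩
      · intro χ
        rw [hzval χ]
        by_cases h1 : χ = ψ
        · rw [if_pos h1, if_neg (fun h => hpf (h1.symm.trans h))]
          rw [h1]; linarith
        · by_cases h2 : χ = φ
          · rw [if_neg h1, if_pos h2, h2]; have := h0 φ; linarith
          · rw [if_neg h1, if_neg h2]; have := h0 χ; linarith
      · intro χ
        rw [hzval χ]
        by_cases h1 : χ = ψ
        · rw [if_pos h1, if_neg (fun h => hpf (h1.symm.trans h))]
          rw [h1]; have := hcap ψ; linarith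
        · by_cases h2 : χ = φ
          · rw [if_neg h1, if_pos h2, h2]; linarith
          · rw [if_neg h1, if_neg h2]; have := hcap χ; linarith
      · have h1 := hzsum (fun _ => 1)
        simp only [one_mul] at h1
        rw [h1, hsum]; ring
    have := hopt z hzfeas
    rw [hzsum c] at this
    have h2 : c ψ * (-ε) + c φ * ε ≤ 0 := by linarith
    nlinarith [hεpos]

open Finset in
lemma CE_threshold {Ψ : Type*} [Fintype Ψ] {r : ℝ} {ℓ c y : Ψ → ℝ}
    (hf : CEFeasible r ℓ y)
    (hopt : ∀ z, CEFeasible r ℓ z → ∑ χ, c χ * z χ ≤ ∑ χ, c χ * y χ)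
    (hne : ∃ φ, y φ < ℓ φ) :
    ∃ τ : ℝ, (∀ ψ, 0 < y ψ → τ ≤ c ψ) ∧ (∀ ψ, y ψ < ℓ ψ → c ψ ≤ τ) := by
  obtain ⟨φ0, hφ0⟩ := hne
  have hFne : (univ.filter (fun ψ => y ψ < ℓ ψ)).Nonempty :=
    ⟨φ0, by simp [hφ0]⟩
  refine ⟨(univ.filter (fun ψ => y ψ < ℓ ψ)).sup' hFne c, ?_, ?_⟩
  · intro ψ hψ
    apply Finset.sup'_le
    intro φ hφ
    simp only [mem_filter] at hφ
    exact CE_exchange hf hopt hψ hφ.2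
  · intro ψ hψ
    exact Finset.le_sup' c (by simp [hψ])

open Finset in
lemma CE_sum_P_nonpos {Ψ : Type*} [Fintype Ψ] (w w' m d : Ψ → ℝ)
    (hd : ∀ ψ, d ψ < 0) (ε : ℝ)
    (h1 : ∀ ψ, 0 < m ψ → ε ≤ d ψ * (w ψ - w' ψ))
    (h2 : ∀ ψ, m ψ < 0 → d ψ * (w ψ - w' ψ) ≤ ε)
    (hm : ∑ ψ, m ψ = 0) :
    ∑ ψ ∈ univ.filter (fun ψ => w' ψ < w ψ), m ψ ≤ 0 := by
  rcases le_or_gt 0 ε with hε | hε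
  · apply Finset.sum_nonpos
    intro ψ hψ
    simp only [mem_filter] at hψ
    by_contra hpos
    push_neg at hpos
    have := h1 ψ hpos
    nlinarith [hd ψ, hψ.2]
  · have hofff : ∀ ψ ∈ univ.filter (fun ψ => ¬ w' ψ < w ψ), 0 ≤ m ψ := by
      intro ψ hψ
      simp only [mem_filter] at hψ
      by_contra hneg
      push_neg at hneg
      have := h2 ψ hneg
      have hw : w ψ ≤ w' ψ := le_of_not_gt hψ.2
      nlinarith [hd ψ]
    have hsplit := Finset.sum_filter_add_sum_filter_not univ (fun ψ => w' ψ < w ψ) m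
    rw [hm] at hsplit
    have : 0 ≤ ∑ ψ ∈ univ.filter (fun ψ => ¬ w' ψ < w ψ), m ψ :=
      Finset.sum_nonneg hofff
    linarith

open Finset in
/-- key per-evader comparison: the evader's total mass weakly decreases (in sum)
on the set where the catcher's coverage strictly increased. -/
lemma CE_evader_part {Ψ : Type*} [Fintype Ψ] {r : ℝ} {ℓ b d : Ψ → ℝ}
    (hd : ∀ ψ, d ψ < 0) (w w' v v' : Ψ → ℝ)
    (hv : CEFeasible r ℓ v) (hv' : CEFeasible r ℓ v')
    (hopt : ∀ z, CEFeasible r ℓ z →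
      ∑ χ, (b χ + d χ * w χ) * z χ ≤ ∑ χ, (b χ + d χ * w χ) * v χ)
    (hopt' : ∀ z, CEFeasible r ℓ z →
      ∑ χ, (b χ + d χ * w' χ) * z χ ≤ ∑ χ, (b χ + d χ * w' χ) * v' χ) :
    ∑ ψ ∈ univ.filter (fun ψ => w' ψ < w ψ), (v ψ - v' ψ) ≤ 0 := by
  by_cases hfull : ∀ ψ, ℓ ψ ≤ v ψ
  · -- caps all saturated: both strategies equal ℓ
    have hveq : ∀ ψ, v ψ = ℓ ψ := fun ψ => le_antisymm (hv.2.1 ψ) (hfull ψ)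
    have hsum : ∑ ψ, v' ψ = ∑ ψ, v ψ := by rw [hv.2.2, hv'.2.2]
    have hle : ∀ ψ ∈ univ, v' ψ ≤ v ψ := fun ψ _ => (hveq ψ) ▸ hv'.2.1 ψ
    have := (Finset.sum_eq_sum_iff_of_le hle).mp hsum
    apply le_of_eq
    apply Finset.sum_eq_zero
    intro ψ hψ
    rw [this ψ (mem_univ ψ)]
    ring
  · push_neg at hfull
    have hfull' : ∃ ψ, v' ψ < ℓ ψ := by
      by_contra hc
      push_neg at hc
      have hveq' : ∀ ψ, v' ψ = ℓ ψ := fun ψ => le_antisymm (hv'.2.1 ψ) (hc ψ)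
      have hsum : ∑ ψ, v ψ = ∑ ψ, v' ψ := by rw [hv.2.2, hv'.2.2]
      have hle : ∀ ψ ∈ univ, v ψ ≤ v' ψ := fun ψ _ => (hveq' ψ) ▸ hv.2.1 ψ
      have := (Finset.sum_eq_sum_iff_of_le hle).mp hsum
      obtain ⟨ψ, hψ⟩ := hfull
      have := this ψ (mem_univ ψ)
      rw [hveq' ψ] at this
      linarith
    obtain ⟨τ, hτ1, hτ2⟩ := CE_threshold hv hopt hfull
    obtain ⟨τ', hτ'1, hτ'2⟩ := CE_threshold hv' hopt' hfull'
    apply CE_sum_P_nonpos w w' (fun ψ => v ψ - v' ψ) d hd (τ - τ')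
    · intro ψ hψ
      have hv0 : 0 < v ψ := lt_of_le_of_lt (hv'.1 ψ) (by linarith)
      have hv'cap : v' ψ < ℓ ψ := lt_of_lt_of_le (by linarith [hv.2.1 ψ]) (le_refl _)
      have ha := hτ1 ψ hv0
      have hb := hτ'2 ψ (by linarith [hv.2.1 ψ])
      nlinarith [ha, hb]
    · intro ψ hψ
      have hv'0 : 0 < v' ψ := lt_of_le_of_lt (hv.1 ψ) (by linarith)
      have ha := hτ'1 ψ hv'0
      have hb := hτ2 ψ (by linarith [hv'.2.1 ψ])
      nlinarith [ha, hb]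
    · rw [Finset.sum_sub_distrib, hv.2.2, hv'.2.2]; ring

open Finset in
/-- main one-sided lemma: where the catcher strictly increases coverage, the
total evader mass agrees. -/
lemma CE_main {n : ℕ} {Ψ : Type*} [Fintype Ψ]
    (r0 : ℝ) (ℓ0 b0 d0 : Ψ → ℝ)
    (re : Fin n → ℝ) (ℓe be de : Fin n → Ψ → ℝ)
    (hd0 : ∀ ψ, 0 < d0 ψ) (hde : ∀ i ψ, de i ψ < 0)
    (x0 x0' : Ψ → ℝ) (xe xe' : Fin n → Ψ → ℝ)
    (hx : CENash r0 ℓ0 b0 d0 re ℓe be de x0 xe)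
    (hx' : CENash r0 ℓ0 b0 d0 re ℓe be de x0' xe') :
    ∀ ψ, x0' ψ < x0 ψ → ∑ i, xe i ψ = ∑ i, xe' i ψ := by
  intro ψ0 hψ0
  obtain ⟨hf, hfe, hopt, hopte⟩ := hx
  obtain ⟨hf', hfe', hopt', hopte'⟩ := hx'
  -- there is a site where the catcher strictly decreased coverage
  have hexneg : ∃ φ, x0 φ < x0' φ := by
    by_contra hc
    push_neg at hc
    have hsum : ∑ φ, (x0 φ - x0' φ) = 0 := by
      rw [Finset.sum_sub_distrib, hf.2.2, hf'.2.2]; ring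
    have : (0:ℝ) < ∑ φ, (x0 φ - x0' φ) := by
      apply Finset.sum_pos'
      · intro φ _; linarith [hc φ]
      · exact ⟨ψ0, mem_univ ψ0, by linarith⟩
    linarith
  obtain ⟨φ0, hφ0⟩ := hexneg
  -- thresholds for the catcher in both equilibria
  obtain ⟨lam, hlam1, hlam2⟩ := CE_threshold hf hopt
    ⟨φ0, lt_of_lt_of_le hφ0 (hf'.2.1 φ0)⟩
  obtain ⟨lam', hlam'1, hlam'2⟩ := CE_threshold hf' hopt'
    ⟨ψ0, lt_of_lt_of_le hψ0 (hf.2.1 ψ0)⟩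
  -- sums of evader-mass differences over the monotonicity sets
  have hsumP : ∑ ψ ∈ univ.filter (fun ψ => x0' ψ < x0 ψ),
      ((∑ i, xe i ψ) - (∑ i, xe' i ψ)) ≤ 0 := by
    have : ∀ ψ ∈ univ.filter (fun ψ => x0' ψ < x0 ψ),
        ((∑ i, xe i ψ) - (∑ i, xe' i ψ)) = ∑ i, (xe i ψ - xe' i ψ) := by
      intro ψ _; rw [Finset.sum_sub_distrib]
    rw [Finset.sum_congr rfl this, Finset.sum_comm]
    apply Finset.sum_nonpos
    intro i _
    exact CE_evader_part (hde i) x0 x0' (xe i) (xe' i) (hfe i) (hfe' i)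
      (hopte i) (hopte' i)
  have hsumN : ∑ ψ ∈ univ.filter (fun ψ => x0 ψ < x0' ψ),
      ((∑ i, xe' i ψ) - (∑ i, xe i ψ)) ≤ 0 := by
    have : ∀ ψ ∈ univ.filter (fun ψ => x0 ψ < x0' ψ),
        ((∑ i, xe' i ψ) - (∑ i, xe i ψ)) = ∑ i, (xe' i ψ - xe i ψ) := by
      intro ψ _; rw [Finset.sum_sub_distrib]
    rw [Finset.sum_congr rfl this, Finset.sum_comm]
    apply Finset.sum_nonpos
    intro i _
    exact CE_evader_part (hde i) x0' x0 (xe' i) (xe i) (hfe' i) (hfe i)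
      (hopte' i) (hopte i)
  rcases le_or_gt lam' lam with hll | hll
  · -- pointwise on P the evader mass weakly increases, so it is constant
    have hptwise : ∀ ψ ∈ univ.filter (fun ψ => x0' ψ < x0 ψ),
        0 ≤ (∑ i, xe i ψ) - (∑ i, xe' i ψ) := by
      intro ψ hψ
      simp only [mem_filter] at hψ
      have h1 : lam ≤ b0 ψ + d0 ψ * ∑ i, xe i ψ :=
        hlam1 ψ (lt_of_le_of_lt (hf'.1 ψ) hψ.2)
      have h2 : b0 ψ + d0 ψ * ∑ i, xe' i ψ ≤ lam' :=
        hlam'2 ψ (lt_of_lt_of_le hψ.2 (hf.2.1 ψ))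
      nlinarith [hd0 ψ]
    have hzero := (Finset.sum_eq_zero_iff_of_nonneg hptwise).mp
      (le_antisymm hsumP (Finset.sum_nonneg hptwise))
    have := hzero ψ0 (by simp [hψ0])
    linarith
  · -- lam < lam' : contradiction via the set N where coverage decreased
    exfalso
    have hpt : ∀ ψ ∈ univ.filter (fun ψ => x0 ψ < x0' ψ),
        0 < (∑ i, xe' i ψ) - (∑ i, xe i ψ) := by
      intro ψ hψ
      simp only [mem_filter] at hψ
      have h1 : lam' ≤ b0 ψ + d0 ψ * ∑ i, xe' i ψ :=
        hlam'1 ψ (lt_of_le_of_lt (hf.1 ψ) hψ.2)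
      have h2 : b0 ψ + d0 ψ * ∑ i, xe i ψ ≤ lam :=
        hlam2 ψ (lt_of_lt_of_le hψ.2 (hf'.2.1 ψ))
      nlinarith [hd0 ψ]
    have hpos : 0 < ∑ ψ ∈ univ.filter (fun ψ => x0 ψ < x0' ψ),
        ((∑ i, xe' i ψ) - (∑ i, xe i ψ)) :=
      Finset.sum_pos hpt ⟨φ0, by simp [hφ0]⟩
    linarith

/-- For any two Nash equilibria of a CE game and any site, either the catcher's
coverage agrees or the total evader mass agrees. -/
theorem stmt_7 {n : ℕ} {Ψ : Type*} [Fintype Ψ]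
    (r0 : ℝ) (ℓ0 b0 d0 : Ψ → ℝ)
    (re : Fin n → ℝ) (ℓe be de : Fin n → Ψ → ℝ)
    (hd0 : ∀ ψ, 0 < d0 ψ) (hde : ∀ i ψ, de i ψ < 0)
    (x0 x0' : Ψ → ℝ) (xe xe' : Fin n → Ψ → ℝ)
    (hx : CENash r0 ℓ0 b0 d0 re ℓe be de x0 xe)
    (hx' : CENash r0 ℓ0 b0 d0 re ℓe be de x0' xe') :
    ∀ ψ, x0 ψ = x0' ψ ∨ ∑ i, xe i ψ = ∑ i, xe' i ψ := by
  intro ψ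
  rcases lt_trichotomy (x0 ψ) (x0' ψ) with h | h | h
  · exact Or.inr ((CE_main r0 ℓ0 b0 d0 re ℓe be de hd0 hde x0' x0 xe' xe hx' hx ψ h).symm)
  · exact Or.inl h
  · exact Or.inr (CE_main r0 ℓ0 b0 d0 re ℓe be de hd0 hde x0 x0' xe xe' hx hx' ψ h)
end

section
/- Suppose x and x' are two Nash equilibria of a CE game, and for some evader i and sites ψ⁻, ψ⁺ we have: x'_{i,ψ⁻} < x_{i,ψ⁻}, x'_{0,ψ⁻} < x_{0,ψ⁻}, and x'_{i,ψ⁺} > x_{i,ψ⁺}. Then θ'_i > θ_i and x'_{0,ψ⁺} < x_{0,ψ⁺}, where θ_i = min over ψ with x_{i,ψ} > 0 of μ_{i,ψ} is evader i's threshold, and μ_{i,ψ} = b_{i,ψ} + d_{i,ψ}·x_{0,ψ} with d_{i,ψ} < 0. -/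
open Finset in
/-- Best-response upper bound: if `x ψ < ℓ ψ` then `μ ψ ≤ μ ψ0` for any `ψ0`
with `x ψ0 > 0`. -/
lemma br_ub {Ψ : Type*} [Fintype Ψ] (r : ℝ) (ℓ μ x : Ψ → ℝ)
    (hfeas : CEFeasible r ℓ x)
    (hbr : ∀ y, CEFeasible r ℓ y → ∑ ψ, μ ψ * y ψ ≤ ∑ ψ, μ ψ * x ψ)
    (ψ0 ψ : Ψ) (h0 : 0 < x ψ0) (hψ : x ψ < ℓ ψ) : μ ψ ≤ μ ψ0 := by
  classical
  by_contra hlt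
  push_neg at hlt
  have hne : ψ ≠ ψ0 := fun h => absurd rfl (by rw [h] at hlt; exact hlt.ne')
  obtain ⟨hnn, hub, hsum⟩ := hfeas
  set ε : ℝ := min (x ψ0) (ℓ ψ - x ψ) with hε
  have hεpos : 0 < ε := lt_min h0 (by linarith)
  have hε0 : ε ≤ x ψ0 := min_le_left _ _
  have hεψ : ε ≤ ℓ ψ - x ψ := min_le_right _ _
  set y : Ψ → ℝ := fun t => x t + (if t = ψ then ε else 0) - (if t = ψ0 then ε else 0)
    with hy
  have hyfeas : CEFeasible r ℓ y := by
    refine ⟨fun t => ?_, fun t => ?_, ?_⟩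
    · show 0 ≤ (x t + if t = ψ then ε else 0) - (if t = ψ0 then ε else 0)
      rcases eq_or_ne t ψ0 with h2 | h2
      · subst h2
        rw [if_neg (fun h => hne h.symm), if_pos rfl]
        linarith
      · rw [if_neg h2]
        rcases eq_or_ne t ψ with h1 | h1
        · rw [if_pos h1]; linarith [hnn t]
        · rw [if_neg h1]; linarith [hnn t]
    · show (x t + if t = ψ then ε else 0) - (if t = ψ0 then ε else 0) ≤ ℓ t
      rcases eq_or_ne t ψ with h1 | h1
      · subst h1
        rw [if_pos rfl, if_neg hne]
        linarith
      · rw [if_neg h1]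
        rcases eq_or_ne t ψ0 with h2 | h2
        · rw [if_pos h2]; linarith [hub t]
        · rw [if_neg h2]; linarith [hub t]
    · simp only [hy]
      rw [Finset.sum_sub_distrib, Finset.sum_add_distrib]
      simp [Finset.sum_ite_eq', hsum]
  have := hbr y hyfeas
  have hcalc : ∑ t, μ t * y t = (∑ t, μ t * x t) + ε * (μ ψ - μ ψ0) := by
    simp only [hy, mul_sub, mul_add]
    rw [Finset.sum_sub_distrib, Finset.sum_add_distrib]
    have e1 : ∑ t, μ t * (if t = ψ then ε else 0) = μ ψ * ε := by
      rw [Finset.sum_congr rfl (fun t _ => by rw [mul_ite, mul_zero])]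
      simp [Finset.sum_ite_eq']
    have e2 : ∑ t, μ t * (if t = ψ0 then ε else 0) = μ ψ0 * ε := by
      rw [Finset.sum_congr rfl (fun t _ => by rw [mul_ite, mul_zero])]
      simp [Finset.sum_ite_eq']
    rw [e1, e2]; ring
  rw [hcalc] at this
  nlinarith

/-- Step of Lemma `same` (case `−−` implies case `−+`): if evader `i` moves
resource away from a site `ψ⁻` whose coverage also dropped, and moves resource
onto a site `ψ⁺`, then `i`'s threshold strictly increases and the coverage of
`ψ⁺` strictly decreases. Here `θ i = min {μ_{i,ψ} : x_{i,ψ} > 0}` with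
`μ_{i,ψ} = b_{i,ψ} + d_{i,ψ}·x_{0,ψ}`. -/
theorem stmt_10 {n : ℕ} {Ψ : Type*} [Fintype Ψ]
    (r0 : ℝ) (ℓ0 b0 d0 : Ψ → ℝ)
    (re : Fin n → ℝ) (ℓe be de : Fin n → Ψ → ℝ)
    (hd0 : ∀ ψ, 0 < d0 ψ) (hde : ∀ i ψ, de i ψ < 0)
    (x0 x0' : Ψ → ℝ) (xe xe' : Fin n → Ψ → ℝ)
    (hx : CENash r0 ℓ0 b0 d0 re ℓe be de x0 xe)
    (hx' : CENash r0 ℓ0 b0 d0 re ℓe be de x0' xe')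
    (i : Fin n) (θ θ' : ℝ)
    -- `θ` is the minimum of `μ_{i,ψ}` over sites with `xe i ψ > 0`
    (hθmem : ∃ ψ, 0 < xe i ψ ∧ be i ψ + de i ψ * x0 ψ = θ)
    (hθlb : ∀ ψ, 0 < xe i ψ → θ ≤ be i ψ + de i ψ * x0 ψ)
    (hθ'mem : ∃ ψ, 0 < xe' i ψ ∧ be i ψ + de i ψ * x0' ψ = θ')
    (hθ'lb : ∀ ψ, 0 < xe' i ψ → θ' ≤ be i ψ + de i ψ * x0' ψ)
    (ψm ψp : Ψ)
    (h1 : xe' i ψm < xe i ψm) (h2 : x0' ψm < x0 ψm) (h3 : xe i ψp < xe' i ψp) :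
    θ < θ' ∧ x0' ψp < x0 ψp := by
  obtain ⟨_, hfe, _, hbr⟩ := hx
  obtain ⟨_, hfe', _, hbr'⟩ := hx'
  obtain ⟨ψ0, hψ0pos, hψ0⟩ := hθmem
  obtain ⟨ψ0', hψ0'pos, hψ0'⟩ := hθ'mem
  -- θ < θ'
  have hmpos : 0 < xe i ψm := lt_of_le_of_lt ((hfe' i).1 ψm) h1
  have hmθ : θ ≤ be i ψm + de i ψm * x0 ψm := hθlb ψm hmpos
  have hmlt : xe' i ψm < ℓe i ψm := lt_of_lt_of_le h1 ((hfe i).2.1 ψm)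
  have hmub : be i ψm + de i ψm * x0' ψm ≤ be i ψ0' + de i ψ0' * x0' ψ0' :=
    br_ub (re i) (ℓe i) (fun ψ => be i ψ + de i ψ * x0' ψ) (xe' i) (hfe' i)
      (hbr' i) ψ0' ψm hψ0'pos hmlt
  have hmono : be i ψm + de i ψm * x0 ψm < be i ψm + de i ψm * x0' ψm := by
    nlinarith [hde i ψm]
  have hθθ' : θ < θ' := by rw [← hψ0']; linarith
  refine ⟨hθθ', ?_⟩
  -- x0' ψp < x0 ψp
  have hppos : 0 < xe' i ψp := lt_of_le_of_lt ((hfe i).1 ψp) h3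
  have hpθ' : θ' ≤ be i ψp + de i ψp * x0' ψp := hθ'lb ψp hppos
  have hplt : xe i ψp < ℓe i ψp := lt_of_lt_of_le h3 ((hfe' i).2.1 ψp)
  have hpub : be i ψp + de i ψp * x0 ψp ≤ be i ψ0 + de i ψ0 * x0 ψ0 :=
    br_ub (re i) (ℓe i) (fun ψ => be i ψ + de i ψ * x0 ψ) (xe i) (hfe i)
      (hbr i) ψ0 ψp hψ0pos hplt
  rw [hψ0] at hpub
  nlinarith [hde i ψp]
end

section
/- Under the rate conditions γ_ψ·d_{i,ψ} ≥ −γ_i whenever x_{i,ψ} > 0, and γ_ψ·d_{i,ψ} ≤ −γ_i whenever x_{i,ψ} < ℓ_{i,ψ}, and assuming μ⁰_{i,ψ} = θ⁰_i for all active pairs, it holds for every Δ ≥ 0 that the updated per-resource utilities μ_{i,ψ} = μ⁰_{i,ψ} + Δ·γ_ψ·d_{i,ψ} and thresholds θ_i = θ⁰_i − Δ·γ_i satisfy the evader best-response conditions on active pairs: x_{i,ψ} > 0 implies μ_{i,ψ} ≥ θ_i, and x_{i,ψ} < ℓ_{i,ψ} implies μ_{i,ψ} ≤ θ_i. -/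
/-- Core of Lemma `increase-ne`: under the rate conditions, increasing the
coverage by `Δ·γ_ψ` (so `μ` changes by `Δ·γ_ψ·d`) and decreasing thresholds by
`Δ·γ_i` preserves the evaders' best-response conditions on active pairs. -/
theorem stmt_13 {I Ψ : Type*} (x ℓ d : I → Ψ → ℝ) (γs : Ψ → ℝ) (γi : I → ℝ)
    (μ0 : I → Ψ → ℝ) (θ0 : I → ℝ) (Δ : ℝ) (hΔ : 0 ≤ Δ)
    (hd : ∀ i ψ, d i ψ < 0)
    (hrate1 : ∀ i ψ, 0 < x i ψ → -(γi i) ≤ γs ψ * d i ψ)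
    (hrate2 : ∀ i ψ, x i ψ < ℓ i ψ → γs ψ * d i ψ ≤ -(γi i)) :
    ∀ i ψ, μ0 i ψ = θ0 i →
      (0 < x i ψ → θ0 i - Δ * γi i ≤ μ0 i ψ + Δ * (γs ψ * d i ψ)) ∧
      (x i ψ < ℓ i ψ → μ0 i ψ + Δ * (γs ψ * d i ψ) ≤ θ0 i - Δ * γi i) := by
  intro i ψ h
  rw [h]
  constructor
  · intro hx
    have := mul_le_mul_of_nonneg_left (hrate1 i ψ hx) hΔ
    linarith
  · intro hx
    have := mul_le_mul_of_nonneg_left (hrate2 i ψ hx) hΔ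
    linarith
end
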